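/- arXiv:1811.00102 — 2 statements merged into one kernel-verified Lean document; each statement's English description precedes it below -/
import Mathlib

section
/- Let d(x,y) = ‖x − y‖² and F(Y) = −(1/β)Σᵢ pᵢ log Σⱼ e^{−β‖xᵢ−yⱼ‖²}. At a critical point Y of F, the second directional derivative along a perturbation Ψ = (ψ₁,…,ψ_k) equals Σᵢⱼ 2 pᵢ p(j|i) ψⱼᵀ[I − 2β C_{X|yⱼ}]ψⱼ + Σᵢ 4β pᵢ (Σⱼ p(j|i)(xᵢ−yⱼ)ᵀψⱼ)², where C_{X|yⱼ} = Σᵢ p(i|j)(xᵢ−yⱼ)(xᵢ−yⱼ)ᵀ, up to an overall positive scalar normalization. -/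
/-!
Along the line `ε ↦ Y + εΨ` every exponent `-β‖xᵢ - yⱼ - εψⱼ‖²` is a quadratic polynomial in `ε`.
The second derivative of a log-sum-exp is the variance of the first derivatives of the exponents
under the softmax weights `p(j|i)` plus the softmax mean of their second derivatives; here this
gives `Σᵢⱼ 2pᵢp(j|i)(‖ψⱼ‖² - 2β⟨xᵢ-yⱼ,ψⱼ⟩²) + Σᵢ 4βpᵢ(Σⱼ p(j|i)⟨xᵢ-yⱼ,ψⱼ⟩)²`. Bayes' rule
`pᵢ p(j|i) = p(i|j) Σₘ pₘ p(j|m)` then regroups `Σᵢ pᵢ p(j|i)⟨xᵢ-yⱼ,ψⱼ⟩²` as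
`(Σₘ pₘ p(j|m)) ψⱼᵀ C_{X|yⱼ} ψⱼ`, so the identity holds exactly, with normalisation `c = 1`.
-/

open scoped RealInnerProductSpace

open Real Finset

noncomputable def softmax {ι : Type*} [Fintype ι] (u : ι → ℝ) (j : ι) : ℝ :=
  exp (u j) / ∑ l, exp (u l)

section LogSumExp

variable {ι : Type*} [Fintype ι] {q q' : ι → ℝ → ℝ} {q'' : ι → ℝ} {t : ℝ}

theorem hasDerivAt_softmax (hq : ∀ j, HasDerivAt (q j) (q' j t) t) (j : ι) :
    HasDerivAt (fun s => softmax (q · s) j)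
      (softmax (q · t) j * (q' j t - ∑ l, softmax (q · t) l * q' l t)) t := by
  have hZ : ∑ l, exp (q l t) ≠ 0 := (sum_pos (fun l _ => exp_pos _) ⟨j, mem_univ j⟩).ne'
  refine ((hq j).exp.div (HasDerivAt.fun_sum fun l _ => (hq l).exp) hZ).congr_deriv ?_
  simp only [softmax, div_mul_eq_mul_div, ← sum_div]
  field_simp

theorem hasDerivAt_log_sum_exp (hq : ∀ j, HasDerivAt (q j) (q' j t) t) :
    HasDerivAt (fun s => log (∑ j, exp (q j s))) (∑ j, softmax (q · t) j * q' j t) t := by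
  rcases isEmpty_or_nonempty ι with _ | _
  · simpa using hasDerivAt_const t (log 0)
  have hZ : ∑ l, exp (q l t) ≠ 0 := (sum_pos (fun l _ => exp_pos _) univ_nonempty).ne'
  refine ((HasDerivAt.fun_sum fun l _ => (hq l).exp).log hZ).congr_deriv ?_
  simp only [softmax, sum_div, div_mul_eq_mul_div]

theorem hasDerivAt_sum_softmax_mul (hq : ∀ j, HasDerivAt (q j) (q' j t) t)
    (hq' : ∀ j, HasDerivAt (q' j) (q'' j) t) :
    HasDerivAt (fun s => ∑ j, softmax (q · s) j * q' j s)
      (∑ j, softmax (q · t) j * (q' j t ^ 2 + q'' j)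
        - (∑ j, softmax (q · t) j * q' j t) ^ 2) t := by
  refine (HasDerivAt.fun_sum fun j _ => (hasDerivAt_softmax hq j).mul (hq' j)).congr_deriv ?_
  simp only [mul_sub, sub_mul, mul_add, sum_add_distrib, sum_sub_distrib, pow_two, ← mul_assoc,
    mul_right_comm (softmax (q · t) _) (∑ l, _) (q' _ t), ← sum_mul]
  ring

end LogSumExp

theorem iteratedDeriv_two_eq_of_hasDerivAt {f f' : ℝ → ℝ} {f'' x : ℝ}
    (hf : ∀ t, HasDerivAt f (f' t) t) (hf' : HasDerivAt f' f'' x) :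
    iteratedDeriv 2 f x = f'' := by
  rw [iteratedDeriv_succ, iteratedDeriv_one, funext fun t => (hf t).deriv, hf'.deriv]

theorem iteratedDeriv_two_sum_mul_log_sum_exp {κ ι : Type*} [Fintype κ] [Fintype ι]
    (c : κ → ℝ) {q q' : κ → ι → ℝ → ℝ} {q'' : κ → ι → ℝ} {x : ℝ}
    (hq : ∀ i j t, HasDerivAt (q i j) (q' i j t) t)
    (hq' : ∀ i j, HasDerivAt (q' i j) (q'' i j) x) :
    iteratedDeriv 2 (fun s => ∑ i, c i * log (∑ j, exp (q i j s))) x =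
      ∑ i, c i * (∑ j, softmax (q i · x) j * (q' i j x ^ 2 + q'' i j)
        - (∑ j, softmax (q i · x) j * q' i j x) ^ 2) :=
  iteratedDeriv_two_eq_of_hasDerivAt
    (fun t => HasDerivAt.fun_sum fun i _ => (hasDerivAt_log_sum_exp (hq i · t)).const_mul (c i))
    (HasDerivAt.fun_sum fun i _ => (hasDerivAt_sum_softmax_mul (hq i · x) (hq' i)).const_mul (c i))

section Line

variable {E : Type*} [NormedAddCommGroup E] [InnerProductSpace ℝ E] (a ψ : E) (c t : ℝ)

theorem hasDerivAt_neg_mul_norm_sub_smul_sq :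
    HasDerivAt (fun s : ℝ => -c * ‖a - s • ψ‖ ^ 2) (2 * c * ⟪a - t • ψ, ψ⟫) t := by
  refine ((((hasDerivAt_id t).smul_const ψ).const_sub a).norm_sq.const_mul (-c)).congr_deriv ?_
  simp only [id, one_smul, inner_neg_right]
  ring

theorem hasDerivAt_mul_inner_sub_smul :
    HasDerivAt (fun s : ℝ => c * ⟪a - s • ψ, ψ⟫) (-(c * ‖ψ‖ ^ 2)) t := by
  refine ((((hasDerivAt_id t).smul_const ψ).const_sub a).inner ℝ
    (hasDerivAt_const t ψ)).const_mul c |>.congr_deriv ?_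
  simp

end Line

theorem sum_sum_mul_posterior_mean {ι κ : Type*} [Fintype ι] [Fintype κ] {w : ι → κ → ℝ}
    (hw : ∀ i j, 0 ≤ w i j) (f : ι → κ → ℝ) :
    ∑ i, ∑ j, w i j * ∑ m, w m j / (∑ l, w l j) * f m j = ∑ i, ∑ j, w i j * f i j := by
  rw [sum_comm, sum_comm (γ := ι)]
  refine sum_congr rfl fun j _ => ?_
  rw [← sum_mul]
  by_cases h : ∑ l, w l j = 0
  -- a nonnegative column with zero sum vanishes, so the junk value `_ / 0 = 0` is harmless
  · have hw0 := (sum_eq_zero_iff_of_nonneg fun i _ => hw i j).1 h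
    simp [hw0]
  · rw [mul_sum]
    exact sum_congr rfl fun m _ => by field_simp

section FreeEnergy

variable {E ι κ : Type*} [NormedAddCommGroup E] [InnerProductSpace ℝ E]
  [Fintype ι] [Fintype κ]

noncomputable def freeEnergy (β : ℝ) (p : κ → ℝ) (x : κ → E) (y : ι → E) : ℝ :=
  -(1 / β) * ∑ i, p i * log (∑ j, exp (-β * ‖x i - y j‖ ^ 2))

theorem neg_one_div_mul_sub_sq_eq {β : ℝ} (hβ : β ≠ 0) (c : ℝ) (w a b : ι → ℝ) :
    -(1 / β) * c * (∑ j, w j * ((2 * β * a j) ^ 2 + -(2 * β * b j))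
        - (∑ j, w j * (2 * β * a j)) ^ 2) =
      ∑ j, 2 * c * w j * (b j - 2 * β * a j ^ 2) + 4 * β * c * (∑ j, w j * a j) ^ 2 := by
  have hmean : ∑ j, w j * (2 * β * a j) = 2 * β * ∑ j, w j * a j := by
    rw [mul_sum]; exact sum_congr rfl fun j _ => by ring
  rw [hmean, mul_sub, mul_sum, sub_eq_add_neg]
  congr 1
  · refine sum_congr rfl fun j _ => ?_
    field_simp
    ring
  · field_simp
    ring

theorem iteratedDeriv_two_freeEnergy_line {β : ℝ} (hβ : β ≠ 0) (p : κ → ℝ) (x : κ → E)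
    (y ψ : ι → E) :
    iteratedDeriv 2 (fun ε : ℝ => freeEnergy β p x (y + ε • ψ)) 0 =
      ∑ i, (∑ j, 2 * p i * softmax (fun l => -β * ‖x i - y l‖ ^ 2) j *
          (‖ψ j‖ ^ 2 - 2 * β * ⟪x i - y j, ψ j⟫ ^ 2)
        + 4 * β * p i *
          (∑ j, softmax (fun l => -β * ‖x i - y l‖ ^ 2) j * ⟪x i - y j, ψ j⟫) ^ 2) := by
  have hline : (fun ε : ℝ => freeEnergy β p x (y + ε • ψ)) = fun ε => ∑ i, -(1 / β) * p i *
      log (∑ j, exp (-β * ‖x i - y j - ε • ψ j‖ ^ 2)) := by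
    funext ε
    simp only [freeEnergy, mul_sum, Pi.add_apply, Pi.smul_apply, sub_sub, mul_assoc]
  rw [hline, iteratedDeriv_two_sum_mul_log_sum_exp _
    (fun i j t => hasDerivAt_neg_mul_norm_sub_smul_sq (x i - y j) (ψ j) β t)
    (fun i j => hasDerivAt_mul_inner_sub_smul (x i - y j) (ψ j) (2 * β) 0)]
  simp only [zero_smul, sub_zero]
  exact sum_congr rfl fun i _ => neg_one_div_mul_sub_sq_eq hβ _ _ _ _

end FreeEnergy

theorem free_energy_second_directional_derivative_general
    (d k N : ℕ) (x : Fin N → EuclideanSpace ℝ (Fin d)) (p : Fin N → ℝ)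
    (hp : ∀ i, 0 < p i) (β : ℝ) (hβ : 0 < β)
    (F : (Fin k → EuclideanSpace ℝ (Fin d)) → ℝ)
    (hF : ∀ Z, F Z = -(1 / β) * ∑ i, p i * Real.log (∑ j, Real.exp (-β * ‖x i - Z j‖ ^ 2)))
    (Y Ψ : Fin k → EuclideanSpace ℝ (Fin d))
    (P : Fin k → Fin N → ℝ)
    (hP : ∀ j i, P j i =
      Real.exp (-β * ‖x i - Y j‖ ^ 2) / ∑ l, Real.exp (-β * ‖x i - Y l‖ ^ 2))
    (Q : Fin N → Fin k → ℝ)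
    (hQ : ∀ i j, Q i j = p i * P j i / ∑ m, p m * P j m) :
    ∃ c : ℝ, 0 < c ∧
      iteratedDeriv 2 (fun ε : ℝ => F (Y + ε • Ψ)) 0 =
        c * ((∑ i, ∑ j, 2 * p i * P j i *
              (‖Ψ j‖ ^ 2 - 2 * β * ∑ m, Q m j * ⟪x m - Y j, Ψ j⟫ ^ 2)) +
            ∑ i, 4 * β * p i * (∑ j, P j i * ⟪x i - Y j, Ψ j⟫) ^ 2) := by
  refine ⟨1, one_pos, ?_⟩
  obtain rfl : F = freeEnergy β p x := funext hF
  have hsoftmax : ∀ i, softmax (fun j => -β * ‖x i - Y j‖ ^ 2) = (P · i) :=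
    fun i => funext fun j => (hP j i).symm
  have hposterior := sum_sum_mul_posterior_mean (w := fun i j => p i * P j i)
    (fun i j => mul_nonneg (hp i).le (by rw [hP]; positivity))
    (fun i j => ⟪x i - Y j, Ψ j⟫ ^ 2)
  simp only [← hQ] at hposterior
  rw [iteratedDeriv_two_freeEnergy_line hβ.ne', one_mul, sum_add_distrib]
  simp only [hsoftmax, mul_sub, sum_sub_distrib]
  congr 2
  have hfactor : ∀ a b v : ℝ, 2 * a * b * (2 * β * v) = 4 * β * (a * b * v) :=
    fun _ _ _ => by ring
  simp only [hfactor, ← mul_sum, hposterior]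

/-- at a critical point `Y` of the free energy `F`, the second directional
derivative along a perturbation `Ψ` equals (up to a positive scalar)
`Σᵢⱼ 2pᵢp(j|i) ψⱼᵀ[I − 2βC_{X|yⱼ}]ψⱼ + Σᵢ 4βpᵢ(Σⱼ p(j|i)(xᵢ−yⱼ)ᵀψⱼ)²`,
where `ψⱼᵀ C_{X|yⱼ} ψⱼ = Σₘ p(m|j)⟨xₘ−yⱼ,ψⱼ⟩²`. -/
theorem free_energy_second_directional_derivative
    (d k N : ℕ) (x : Fin N → EuclideanSpace ℝ (Fin d)) (p : Fin N → ℝ)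
    (hp : ∀ i, 0 < p i) (hp1 : ∑ i, p i = 1) (β : ℝ) (hβ : 0 < β)
    (F : (Fin k → EuclideanSpace ℝ (Fin d)) → ℝ)
    (hF : ∀ Z, F Z = -(1 / β) * ∑ i, p i * Real.log (∑ j, Real.exp (-β * ‖x i - Z j‖ ^ 2)))
    (Y Ψ : Fin k → EuclideanSpace ℝ (Fin d))
    (P : Fin k → Fin N → ℝ)
    (hP : ∀ j i, P j i =
      Real.exp (-β * ‖x i - Y j‖ ^ 2) / ∑ l, Real.exp (-β * ‖x i - Y l‖ ^ 2))
    (Q : Fin N → Fin k → ℝ)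
    (hQ : ∀ i j, Q i j = p i * P j i / ∑ m, p m * P j m)
    (hcrit : fderiv ℝ F Y = 0) :
    ∃ c : ℝ, 0 < c ∧
      iteratedDeriv 2 (fun ε : ℝ => F (Y + ε • Ψ)) 0 =
        c * ((∑ i, ∑ j, 2 * p i * P j i *
              (‖Ψ j‖ ^ 2 - 2 * β * ∑ m, Q m j * ⟪x m - Y j, Ψ j⟫ ^ 2)) +
            ∑ i, 4 * β * p i * (∑ j, P j i * ⟪x i - Y j, Ψ j⟫) ^ 2) :=
  free_energy_second_directional_derivative_general d k N x p hp β hβ F hF Y Ψ P hP Q hQ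
end

section
/- Let H(Ψ) = Σⱼ aⱼ ψⱼᵀ M_j ψⱼ + Σᵢ bᵢ (Σⱼ c_{ij} vᵢⱼᵀ ψⱼ)² with aⱼ > 0, bᵢ ≥ 0, c_{ij} ≥ 0, M_j symmetric. If some M_{j₀} is not positive definite and there exist two indices j₁ ≠ j₂ with M_{j₁} = M_{j₂} = M_{j₀} and c_{i j₁} v_{i j₁} = c_{i j₂} v_{i j₂} for all i, then there exists a nonzero Ψ with H(Ψ) ≤ 0. Conversely, if every M_j is positive definite then H(Ψ) > 0 for all nonzero Ψ. -/
/-!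
If every `M j` is positive definite, the first sum is positive on any nonzero `Ψ` and the second
is a nonnegative combination of squares. If `M j₀` is not, pick `ψ ≠ 0` with `ψᵀ M j₀ ψ ≤ 0` and
put `ψ` and `-ψ` on two duplicated centers `j₁, j₂`: the first sum becomes
`(a j₁ + a j₂) ψᵀ M j₀ ψ ≤ 0`, while in each inner sum of the second term the contributions
`c i j₁ vᵢⱼ₁ᵀ ψ` and `-c i j₂ vᵢⱼ₂ᵀ ψ` cancel.
-/

open Matrix

namespace Matrix

variable {n R : Type*} [Fintype n] [Ring R] [LinearOrder R] [StarRing R]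

lemma IsHermitian.exists_dotProduct_mulVec_nonpos_of_not_posDef {A : Matrix n n R}
    (hA : A.IsHermitian) (h : ¬A.PosDef) : ∃ x ≠ 0, star x ⬝ᵥ (A *ᵥ x) ≤ 0 := by
  contrapose! h
  exact PosDef.of_dotProduct_mulVec_pos hA h

end Matrix

lemma Fintype.sum_single_sub_single {ι E M : Type*} [Fintype ι] [DecidableEq ι]
    [AddGroup E] [AddCommMonoid M] {f : ι → E → M} (hf : ∀ j, f j 0 = 0) {j₁ j₂ : ι}
    (hne : j₁ ≠ j₂) (x : E) :
    ∑ j, f j ((Pi.single j₁ x - Pi.single j₂ x : ι → E) j) = f j₁ x + f j₂ (-x) := by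
  rw [Fintype.sum_eq_add j₁ j₂ hne fun j hj => by simp [hj.1, hj.2, hf]]
  simp [hne, hne.symm]

lemma sum_mul_dotProduct_mulVec_pos {ι n R : Type*} [Fintype ι] [Fintype n] [Ring R]
    [PartialOrder R] [IsStrictOrderedRing R] [StarRing R] {a : ι → R} {M : ι → Matrix n n R}
    (ha : ∀ j, 0 < a j) (hM : ∀ j, (M j).PosDef) {Ψ : ι → n → R} (hΨ : Ψ ≠ 0) :
    0 < ∑ j, a j * (star (Ψ j) ⬝ᵥ (M j *ᵥ Ψ j)) := by
  obtain ⟨j₀, hj₀⟩ := Function.ne_iff.mp hΨ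
  refine Finset.sum_pos' (fun j _ => ?_) ⟨j₀, Finset.mem_univ _, ?_⟩
  · exact mul_nonneg (ha j).le ((hM j).posSemidef.dotProduct_mulVec_nonneg _)
  · exact mul_pos (ha j₀) ((hM j₀).dotProduct_mulVec_pos hj₀)

theorem hessian_positivity_characterization_general
    (d k N : ℕ) (a : Fin k → ℝ) (b : Fin N → ℝ) (c : Fin N → Fin k → ℝ)
    (v : Fin N → Fin k → (Fin d → ℝ)) (M : Fin k → Matrix (Fin d) (Fin d) ℝ)
    (ha : ∀ j, 0 < a j) (hb : ∀ i, 0 ≤ b i)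
    (hM : ∀ j, (M j).IsSymm)
    (H : (Fin k → (Fin d → ℝ)) → ℝ)
    (hH : ∀ Ψ, H Ψ = (∑ j, a j * dotProduct (Ψ j) ((M j).mulVec (Ψ j))) +
      ∑ i, b i * (∑ j, c i j * dotProduct (v i j) (Ψ j)) ^ 2) :
    ((∃ j₀ j₁ j₂, ¬ (M j₀).PosDef ∧ j₁ ≠ j₂ ∧ M j₁ = M j₀ ∧ M j₂ = M j₀ ∧
        ∀ i, c i j₁ • v i j₁ = c i j₂ • v i j₂) →
      ∃ Ψ : Fin k → (Fin d → ℝ), Ψ ≠ 0 ∧ H Ψ ≤ 0) ∧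
    ((∀ j, (M j).PosDef) → ∀ Ψ : Fin k → (Fin d → ℝ), Ψ ≠ 0 → 0 < H Ψ) := by
  constructor
  · rintro ⟨j₀, j₁, j₂, hnpd, hne, h₁, h₂, hv⟩
    obtain ⟨ψ, hψ, hquad⟩ := IsHermitian.exists_dotProduct_mulVec_nonpos_of_not_posDef
      (isHermitian_iff_isSymm.mpr (hM j₀)) hnpd
    rw [star_trivial] at hquad
    refine ⟨Pi.single j₁ ψ - Pi.single j₂ ψ,
      fun h => hψ (by simpa [hne.symm] using congrFun h j₁), ?_⟩
    have hcancel (i : Fin N) :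
        ∑ j, c i j * (v i j ⬝ᵥ (Pi.single j₁ ψ - Pi.single j₂ ψ : Fin k → Fin d → ℝ) j) = 0 := by
      rw [Fintype.sum_single_sub_single (f := fun j y => c i j * (v i j ⬝ᵥ y)) (by simp) hne,
        dotProduct_neg, mul_neg, ← smul_eq_mul, ← smul_dotProduct, ← smul_eq_mul,
        ← smul_dotProduct, hv i, add_neg_cancel]
    rw [hH,
      Fintype.sum_single_sub_single (f := fun j y => a j * (y ⬝ᵥ M j *ᵥ y)) (by simp) hne]
    simp only [hcancel, h₁, h₂, mulVec_neg, dotProduct_neg, neg_dotProduct, neg_neg, sq,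
      mul_zero, Finset.sum_const_zero, add_zero, ← add_mul]
    exact mul_nonpos_of_nonneg_of_nonpos (add_pos (ha j₁) (ha j₂)).le hquad
  · intro hpd Ψ hΨ
    have hquad := sum_mul_dotProduct_mulVec_pos ha hpd hΨ
    simp only [star_trivial] at hquad
    rw [hH]
    exact add_pos_of_pos_of_nonneg hquad
      (Finset.sum_nonneg fun i _ => mul_nonneg (hb i) (sq_nonneg _))

/-- abstract Hessian positivity. If some `M_{j₀}` is not positive definite
and there are two indices `j₁ ≠ j₂` with `M_{j₁} = M_{j₂} = M_{j₀}` and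
`c_{ij₁}v_{ij₁} = c_{ij₂}v_{ij₂}` for all `i`, then `H` is non-positive at some nonzero
perturbation; conversely if every `M_j` is positive definite then `H` is positive on all
nonzero perturbations. -/
theorem hessian_positivity_characterization
    (d k N : ℕ) (a : Fin k → ℝ) (b : Fin N → ℝ) (c : Fin N → Fin k → ℝ)
    (v : Fin N → Fin k → (Fin d → ℝ)) (M : Fin k → Matrix (Fin d) (Fin d) ℝ)
    (ha : ∀ j, 0 < a j) (hb : ∀ i, 0 ≤ b i) (hc : ∀ i j, 0 ≤ c i j)
    (hM : ∀ j, (M j).IsSymm)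
    (H : (Fin k → (Fin d → ℝ)) → ℝ)
    (hH : ∀ Ψ, H Ψ = (∑ j, a j * dotProduct (Ψ j) ((M j).mulVec (Ψ j))) +
      ∑ i, b i * (∑ j, c i j * dotProduct (v i j) (Ψ j)) ^ 2) :
    ((∃ j₀ j₁ j₂, ¬ (M j₀).PosDef ∧ j₁ ≠ j₂ ∧ M j₁ = M j₀ ∧ M j₂ = M j₀ ∧
        ∀ i, c i j₁ • v i j₁ = c i j₂ • v i j₂) →
      ∃ Ψ : Fin k → (Fin d → ℝ), Ψ ≠ 0 ∧ H Ψ ≤ 0) ∧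
    ((∀ j, (M j).PosDef) → ∀ Ψ : Fin k → (Fin d → ℝ), Ψ ≠ 0 → 0 < H Ψ) :=
  hessian_positivity_characterization_general d k N a b c v M ha hb hM H hH
end
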